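/- Let n ≥ 1, m ≥ 1, 0 ≤ u ≤ n and 1 ≤ v ≤ n. Then J_{m,u,v} ∩ 𝔄̃_u = J̃_{m,u,v} as ideals of R_n, and consequently 𝕁_{m,u} ∩ Ã_u = 𝕁̃_{m,u}, where Ã_u = {B ∈ IA_n : every entry of B − I_n lies in 𝔄̃_u}. -/

import Mathlib

/-!
Let `π` be the ring retraction of `R_n` sending `x_r ↦ 1` for `r > u`; it is idempotent with kernel
`𝔄̃_u`. Both ideals have the shape `J = 𝔄_n·S + T` and `J̃ = 𝔄̃_u·S + T` with `T ⊆ 𝔄̃_u` and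
`S = 𝔄_n·G + O_m²`, where `G` and `O_m²` are generated by `π`-fixed elements. Since
`𝔄_n ⊆ π(𝔄_n) + 𝔄̃_u`, one gets `𝔄_n·S ⊆ 𝔄̃_u·S + F` with `F = π(𝔄_n)·(π(𝔄_n)·G + O_m²) ⊆ S`
again generated by `π`-fixed elements. For `y ∈ F` one has `y - π y ∈ (ker π)·F`, so an element of
`F` killed by `π` lies in `𝔄̃_u·S`, and the modular law gives `J ∩ 𝔄̃_u = J̃`.
-/

noncomputable section

open Matrix

/-- The Laurent polynomial ring `ℤ[x₁^{±1},…,x_n^{±1}]`, realized as the group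
algebra of the free abelian group `ℤⁿ` over `ℤ`. -/
abbrev LaurentR (n : ℕ) : Type := AddMonoidAlgebra ℤ (Fin n →₀ ℤ)

/-- `x_i` as a unit of `LaurentR n`. -/
def Xu {n : ℕ} (i : Fin n) : (LaurentR n)ˣ where
  val := AddMonoidAlgebra.single (Finsupp.single i 1) 1
  inv := AddMonoidAlgebra.single (-Finsupp.single i 1) 1
  val_inv := by
    rw [AddMonoidAlgebra.single_mul_single]
    simp [AddMonoidAlgebra.one_def]
  inv_val := by
    rw [AddMonoidAlgebra.single_mul_single]
    simp [AddMonoidAlgebra.one_def]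

/-- `x_i` as an element of `LaurentR n`. -/
def Xv {n : ℕ} (i : Fin n) : LaurentR n := (Xu i : LaurentR n)

/-- `σ_i = x_i - 1`. -/
def sg {n : ℕ} (i : Fin n) : LaurentR n := Xv i - 1

/-- The vector `σ⃗`. -/
def sgVec (n : ℕ) : Fin n → LaurentR n := fun i => sg i

/-- `μ_{r,m} = 1 + x_r + ⋯ + x_r^{m-1}`. -/
def muv {n : ℕ} (r : Fin n) (m : ℕ) : LaurentR n := ∑ i ∈ Finset.range m, Xv r ^ i

/-- The augmentation ideal `𝔄_n = Σ σ_i R_n`. -/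
def augI (n : ℕ) : Ideal (LaurentR n) := Ideal.span (Set.range (sgVec n))

/-- The ideal `m·R_n`. -/
def OI (n m : ℕ) : Ideal (LaurentR n) := Ideal.span {(m : LaurentR n)}

/-- The ideal `H_{n,m} = Σ_r (x_r^m − 1)R_n + mR_n`. -/
def HI (n m : ℕ) : Ideal (LaurentR n) :=
  Ideal.span (Set.range (fun r : Fin n => Xv r ^ m - 1) ∪ {(m : LaurentR n)})

/-- `IA_n = {A ∈ GL_n(R_n) : A·σ⃗ = σ⃗}` as a subgroup of `GL_n(R_n)`. -/
def IAn (n : ℕ) : Subgroup (GL (Fin n) (LaurentR n)) where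
  carrier := {g | (g : Matrix (Fin n) (Fin n) (LaurentR n)) *ᵥ sgVec n = sgVec n}
  one_mem' := by simp
  mul_mem' := by
    intro a b ha hb
    simp only [Set.mem_setOf_eq, Units.val_mul] at *
    rw [← Matrix.mulVec_mulVec, hb, ha]
  inv_mem' := by
    intro a ha
    simp only [Set.mem_setOf_eq] at *
    have h : ((a⁻¹ : GL (Fin n) (LaurentR n)) : Matrix (Fin n) (Fin n) (LaurentR n)) *ᵥ
        ((a : Matrix (Fin n) (Fin n) (LaurentR n)) *ᵥ sgVec n) = sgVec n := by
      rw [Matrix.mulVec_mulVec, ← Units.val_mul, inv_mul_cancel, Units.val_one,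
        Matrix.one_mulVec]
    rw [ha] at h
    exact h

/-- The underlying matrix of an element of `IA_n`. -/
def matOf {n : ℕ} (g : IAn n) : Matrix (Fin n) (Fin n) (LaurentR n) :=
  ((g : GL (Fin n) (LaurentR n)) : Matrix (Fin n) (Fin n) (LaurentR n))

/-- The principal congruence subgroup `IG_{n,m}` (as a subset of `IA_n`). -/
def IGnm (n m : ℕ) : Set (IAn n) := {g | ∀ k l, (matOf g - 1) k l ∈ HI n m}

/-- `IA_n^m`: the subgroup of `IA_n` generated by all `m`-th powers. -/
def IApow (n m : ℕ) : Subgroup (IAn n) := Subgroup.closure (Set.range fun g : IAn n => g ^ m)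


/-- `ISL_{n−1,i}(H)` for `n = k+1`: elements `I + A` of `IA_n` whose `i`-th row of `A`
vanishes, all entries of the minor `A_{i,i}` lie in `σ_iR_n ∩ H`, and
`det(I_{n−1} + A_{i,i}) = 1`. -/
def ISL {k : ℕ} (i : Fin (k + 1)) (H : Ideal (LaurentR (k + 1))) : Set (IAn (k + 1)) :=
  {g | (∀ l, (matOf g - 1) i l = 0) ∧
    (∀ a b : Fin k, (matOf g - 1) (i.succAbove a) (i.succAbove b) ∈
      Ideal.span {sg i} ⊓ H) ∧
    ((matOf g).submatrix i.succAbove i.succAbove).det = 1}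

/-- `IGL_{n−1,i}` for `n = k+1`: elements `I + A` of `IA_n` whose `i`-th row of `A`
vanishes and all entries of the minor `A_{i,i}` lie in `σ_iR_n`. -/
def IGLset {k : ℕ} (i : Fin (k + 1)) : Set (IAn (k + 1)) :=
  {g | (∀ l, (matOf g - 1) i l = 0) ∧
    ∀ a b : Fin k, (matOf g - 1) (i.succAbove a) (i.succAbove b) ∈ Ideal.span {sg i}}

/-- The elementary matrix `I_d + r·E_{a,b}` (`a ≠ b`) as an element of `GL_d(A)`. -/
def elemGL {d : ℕ} {A : Type*} [CommRing A] (a b : Fin d) (hab : a ≠ b) (r : A) :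
    GL (Fin d) A where
  val := 1 + Matrix.single a b r
  inv := 1 - Matrix.single a b r
  val_inv := by
    have h2 : Matrix.single a b r * Matrix.single a b r = 0 :=
      by simp [Matrix.single_mul_single_of_ne, hab.symm]
    rw [mul_sub, mul_one, add_mul, one_mul, h2]
    abel
  inv_val := by
    have h2 : Matrix.single a b r * Matrix.single a b r = 0 :=
      by simp [Matrix.single_mul_single_of_ne, hab.symm]
    rw [sub_mul, one_mul, mul_add, mul_one, h2]
    abel

/-- `E_d(A)`: the subgroup generated by the elementary matrices. -/
def Egrp (d : ℕ) (A : Type*) [CommRing A] : Subgroup (GL (Fin d) A) :=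
  Subgroup.closure {g | ∃ (a b : Fin d) (hab : a ≠ b) (r : A), g = elemGL a b hab r}

/-- `E_d(A,H)`: the normal closure in `E_d(A)` of the elementary matrices with
parameter in the ideal `H`. -/
def EgrpRel (d : ℕ) (A : Type*) [CommRing A] (H : Ideal A) : Subgroup (GL (Fin d) A) :=
  Subgroup.closure {g | ∃ e ∈ Egrp d A, ∃ (a b : Fin d) (hab : a ≠ b), ∃ r ∈ H,
    g = e * elemGL a b hab r * e⁻¹}

/-- The generic column ideal used in the definitions of `J_{m,u,v}` and `J̃_{m,u,v}`
(with 1-indexed `u ∈ {0,…,n}` and `v` a 0-indexed column, so "`v ≤ u`" reads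
`v.val < u`).  `lead` is the leading factor (`𝔄̃_u` resp. `𝔄_n`). -/
def colIdeal (n m u : ℕ) (lead : Ideal (LaurentR n)) (v : Fin n) : Ideal (LaurentR n) :=
  lead * ((∑ r : Fin n, if r.val < u then augI n * Ideal.span {sg r * muv r m} else 0)
      + augI n * OI n m + OI n m ^ 2)
    + (if v.val < u then
        ∑ r : Fin n, if u ≤ r.val then Ideal.span {sg r ^ 3 * muv r m} else 0
      else
        (∑ r : Fin n, if u ≤ r.val ∧ r ≠ v then Ideal.span {sg r ^ 3 * muv r m} else 0)
          + augI n * Ideal.span {sg v ^ 2 * muv v m})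

/-- `𝔄̃_u = Σ_{r=u+1}^n σ_rR_n` (1-indexed `u`). -/
def augTil (n u : ℕ) : Ideal (LaurentR n) :=
  Ideal.span {x | ∃ r : Fin n, u ≤ r.val ∧ x = sg r}

/-- The ideal `J̃_{m,u,v}`. -/
def Jtil (n m u : ℕ) (v : Fin n) : Ideal (LaurentR n) := colIdeal n m u (augTil n u) v

/-- The ideal `J_{m,u,v}`. -/
def Jfull (n m u : ℕ) (v : Fin n) : Ideal (LaurentR n) := colIdeal n m u (augI n) v

/-- The determinant condition `det = ∏_r x_r^{s_r·m²}`. -/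
def detMon (n m : ℕ) (g : IAn n) : Prop :=
  ∃ s : Fin n → ℤ,
    (matOf g).det = ∏ r : Fin n, ((Xu r ^ (s r * (m : ℤ) ^ 2) : (LaurentR n)ˣ) : LaurentR n)

/-- The set `𝕁̃_{m,u}`. -/
def JmatTil (n m u : ℕ) : Set (IAn n) :=
  {g | (∀ k v, (matOf g - 1) k v ∈ Jtil n m u v) ∧ detMon n m g}

/-- The set `𝕁_{m,u}`. -/
def JmatFull (n m u : ℕ) : Set (IAn n) :=
  {g | (∀ k v, (matOf g - 1) k v ∈ Jfull n m u v) ∧ detMon n m g}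

/-- The ideal `J_m = Σ_r σ_r³μ_{r,m}R_n + 𝔄_n²·mR_n + 𝔄_n·m²R_n`. -/
def JmI (n m : ℕ) : Ideal (LaurentR n) :=
  Ideal.span (Set.range fun r : Fin n => sg r ^ 3 * muv r m)
    + augI n ^ 2 * OI n m + augI n * OI n (m ^ 2)

/-- The free metabelian group `Φ_n = F_n/F_n''`. -/
instance derivedSeries_normal' (G : Type*) [Group G] (n : ℕ) : (derivedSeries G n).Normal :=
  derivedSeries_normal _ _

def Phi (n : ℕ) : Type := FreeGroup (Fin n) ⧸ derivedSeries (FreeGroup (Fin n)) 2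

instance (n : ℕ) : Group (Phi n) :=
  inferInstanceAs (Group (FreeGroup (Fin n) ⧸ derivedSeries (FreeGroup (Fin n)) 2))


namespace Ideal

variable {R : Type*} [CommRing R] {π : R →+* R}

theorem map_map_of_idempotent (hπ : ∀ x, π (π x) = π x) (I : Ideal R) :
    (I.map π).map π = I.map π := by
  rw [Ideal.map_map]
  congr 1
  exact RingHom.ext hπ

theorem sub_apply_mem_ker (hπ : ∀ x, π (π x) = π x) (x : R) : x - π x ∈ RingHom.ker π := by
  rw [RingHom.mem_ker, map_sub, hπ, sub_self]

theorem le_map_sup_ker (hπ : ∀ x, π (π x) = π x) (I : Ideal R) :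
    I ≤ I.map π ⊔ RingHom.ker π := fun y hy =>
  add_sub_cancel (π y) y ▸ Submodule.add_mem_sup (mem_map_of_mem π hy) (sub_apply_mem_ker hπ y)

theorem sub_apply_mem_ker_mul_map (hπ : ∀ x, π (π x) = π x) {I : Ideal R} {y : R}
    (hy : y ∈ I.map π) : y - π y ∈ RingHom.ker π * I.map π := by
  induction hy using Submodule.span_induction with
  | mem _ hx =>
    obtain ⟨x, -, rfl⟩ := hx
    rw [hπ, sub_self]
    exact zero_mem _
  | zero => simp
  | add y z _ _ hy hz =>
    rw [map_add, add_sub_add_comm]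
    exact add_mem hy hz
  | smul c y hyI hy =>
    have hπy : π y ∈ I.map π := map_map_of_idempotent hπ I ▸ mem_map_of_mem π hyI
    rw [smul_eq_mul, map_mul, show c * y - π c * π y = c * (y - π y) + (c - π c) * π y by ring]
    exact add_mem (mul_mem_left _ c hy) (mul_mem_mul (sub_apply_mem_ker hπ c) hπy)

theorem inf_ker_le_ker_mul (hπ : ∀ x, π (π x) = π x) {S F : Ideal R} (hF : F.map π = F)
    (hFS : F ≤ S) : (RingHom.ker π * S + F) ⊓ RingHom.ker π ≤ RingHom.ker π * S := by
  rintro _ ⟨hy, hyK⟩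
  obtain ⟨k, hk, f, hf, rfl⟩ := Submodule.mem_sup.mp hy
  have hfK : f ∈ RingHom.ker π := by
    simpa only [add_sub_cancel_left] using sub_mem hyK (mul_le_left hk)
  have hfF := sub_apply_mem_ker_mul_map hπ (hF.symm ▸ hf : f ∈ F.map π)
  rw [RingHom.mem_ker.mp hfK, sub_zero, hF] at hfF
  exact add_mem hk (mul_mono_right hFS hfF)

theorem mul_mul_add_inf_ker_le (hπ : ∀ x, π (π x) = π x) {A G O : Ideal R}
    (hA : A.map π ≤ A) (hG : G.map π = G) (hO : O.map π = O) :
    A * (A * G + O) ⊓ RingHom.ker π ≤ RingHom.ker π * (A * G + O) := by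
  set K := RingHom.ker π
  set A₀ := A.map π
  have hAK : A ≤ A₀ + K := le_map_sup_ker hπ A
  have hsplit : A * (A * G + O) ≤ K * (A * G + O) + A₀ * (A₀ * G + O) :=
    calc A * (A * G + O) ≤ (A₀ + K) * (A * G + O) := by gcongr
      _ = A₀ * (A * G + O) + K * (A * G + O) := add_mul _ _ _
      _ ≤ A₀ * ((A₀ + K) * G + O) + K * (A * G + O) := by gcongr
      _ = A₀ * (A₀ * G + O) + K * (A₀ * G) + K * (A * G + O) := by ring
      _ ≤ A₀ * (A₀ * G + O) + K * (A * G + O) + K * (A * G + O) := by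
        gcongr
        exact le_sup_of_le_left (mul_mono_left hA)
      _ = K * (A * G + O) + A₀ * (A₀ * G + O) := by rw [add_assoc, add_idem, add_comm]
  refine (inf_le_inf_right K hsplit).trans (inf_ker_le_ker_mul hπ ?_ ?_)
  · simp only [Submodule.add_eq_sup, Ideal.map_mul, Ideal.map_sup, map_map_of_idempotent hπ, hG,
      hO, A₀]
  · calc A₀ * (A₀ * G + O) ≤ A * (A * G + O) := by gcongr
      _ ≤ A * G + O := mul_le_right

theorem mul_mul_add_add_inf_ker_eq (hπ : ∀ x, π (π x) = π x) {A G O T : Ideal R}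
    (hA : A.map π ≤ A) (hG : G.map π = G) (hO : O.map π = O) (hT : T ≤ RingHom.ker π)
    (hK : RingHom.ker π ≤ A) :
    (A * (A * G + O) + T) ⊓ RingHom.ker π = RingHom.ker π * (A * G + O) + T := by
  have hS : A * (A * G + O) ⊓ RingHom.ker π = RingHom.ker π * (A * G + O) :=
    le_antisymm (mul_mul_add_inf_ker_le hπ hA hG hO) (le_inf (mul_mono_left hK) mul_le_left)
  rw [add_comm _ T, Submodule.add_eq_sup T, sup_inf_assoc_of_le _ hT, hS]
  exact sup_comm _ _

end Ideal

/-- `x_r ↦ 1` for `u ≤ r.val` (the paper's indices `r > u`): the retraction of `R_n` onto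
`ℤ[x_1^{±1},…,x_u^{±1}]`. -/
def truncHom (n u : ℕ) : LaurentR n →+* LaurentR n :=
  AddMonoidAlgebra.mapDomainRingHom ℤ (Finsupp.filterAddHom fun r : Fin n => r.val < u)

section truncHom

variable {n u : ℕ}

theorem truncHom_single (g : Fin n →₀ ℤ) (c : ℤ) :
    truncHom n u (AddMonoidAlgebra.single g c)
      = AddMonoidAlgebra.single (g.filter fun r => r.val < u) c :=
  AddMonoidAlgebra.mapDomain_single

theorem truncHom_truncHom (x : LaurentR n) : truncHom n u (truncHom n u x) = truncHom n u x := by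
  rw [← RingHom.comp_apply, truncHom, ← AddMonoidAlgebra.mapDomainRingHom_comp]
  congr
  ext g r
  change ((Finsupp.single g 1).filter _).filter _ r = (Finsupp.single g 1).filter _ r
  simp only [Finsupp.filter_apply]
  split_ifs <;> rfl

theorem truncHom_Xv_of_lt {r : Fin n} (h : r.val < u) : truncHom n u (Xv r) = Xv r := by
  rw [Xv, Xu, Units.val_mk, truncHom_single,
    Finsupp.filter_single_of_pos (p := fun r : Fin n => r.val < u) h]

theorem truncHom_Xv_of_le {r : Fin n} (h : u ≤ r.val) : truncHom n u (Xv r) = 1 := by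
  rw [Xv, Xu, Units.val_mk, truncHom_single,
    Finsupp.filter_single_of_neg (p := fun r : Fin n => r.val < u) (by omega)]
  rfl

theorem truncHom_sg_of_lt {r : Fin n} (h : r.val < u) : truncHom n u (sg r) = sg r := by
  rw [sg, map_sub, map_one, truncHom_Xv_of_lt h]

theorem truncHom_sg_of_le {r : Fin n} (h : u ≤ r.val) : truncHom n u (sg r) = 0 := by
  rw [sg, map_sub, map_one, truncHom_Xv_of_le h, sub_self]

theorem truncHom_muv_of_lt {r : Fin n} (h : r.val < u) (m : ℕ) :
    truncHom n u (muv r m) = muv r m := by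
  simp only [muv, map_sum, map_pow, truncHom_Xv_of_lt h]

theorem sg_mem_augTil {r : Fin n} (h : u ≤ r.val) : sg r ∈ augTil n u :=
  Ideal.subset_span ⟨r, h, rfl⟩

theorem sg_pow_mul_mem_augTil {r : Fin n} (h : u ≤ r.val) {k : ℕ} (hk : 0 < k)
    (x : LaurentR n) : sg r ^ k * x ∈ augTil n u :=
  Ideal.mul_mem_right _ _ (Ideal.pow_mem_of_mem _ (sg_mem_augTil h) k hk)

theorem augTil_le_augI : augTil n u ≤ augI n := by
  rw [augTil, Ideal.span_le]
  rintro _ ⟨r, -, rfl⟩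
  exact Ideal.subset_span ⟨r, rfl⟩

theorem ker_truncHom : RingHom.ker (truncHom n u) = augTil n u := by
  refine le_antisymm ?_ ?_
  · have hψ : (Ideal.Quotient.mk (augTil n u)).comp (truncHom n u) = Ideal.Quotient.mk _ := by
      ext r
      · simp
      · change Ideal.Quotient.mk _ (truncHom n u (Xv r)) = Ideal.Quotient.mk _ (Xv r)
        rcases lt_or_ge r.val u with h | h
        · rw [truncHom_Xv_of_lt h]
        · rw [truncHom_Xv_of_le h, Ideal.Quotient.eq, ← neg_sub, ← sg]
          exact neg_mem (sg_mem_augTil h)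
    intro x hx
    rw [← Ideal.Quotient.eq_zero_iff_mem, ← hψ, RingHom.comp_apply, RingHom.mem_ker.mp hx,
      map_zero]
  · rw [augTil, Ideal.span_le]
    rintro _ ⟨r, hr, rfl⟩
    exact truncHom_sg_of_le hr

theorem map_truncHom_augI_le : (augI n).map (truncHom n u) ≤ augI n := by
  rw [augI, Ideal.map_span, Ideal.span_le]
  rintro _ ⟨_, ⟨r, rfl⟩, rfl⟩
  rcases lt_or_ge r.val u with h | h
  · exact Ideal.subset_span ⟨r, (truncHom_sg_of_lt h).symm⟩
  · exact (truncHom_sg_of_le h).symm ▸ zero_mem _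

theorem map_truncHom_OI (m : ℕ) : (OI n m).map (truncHom n u) = OI n m := by
  rw [OI, Ideal.map_span, Set.image_singleton, map_natCast]

end truncHom

/-- `J_{m,u,v} = 𝔄_n·(𝔄_n·G + O_m²) + T` with `G = colGen n m u` and `T = colTail n m u v`,
and `J̃_{m,u,v}` likewise with leading factor `𝔄̃_u`. -/
def colGen (n m u : ℕ) : Ideal (LaurentR n) :=
  (∑ r : Fin n, if r.val < u then Ideal.span {sg r * muv r m} else 0) + OI n m

def colTail (n m u : ℕ) (v : Fin n) : Ideal (LaurentR n) :=
  if v.val < u then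
    ∑ r : Fin n, if u ≤ r.val then Ideal.span {sg r ^ 3 * muv r m} else 0
  else
    (∑ r : Fin n, if u ≤ r.val ∧ r ≠ v then Ideal.span {sg r ^ 3 * muv r m} else 0)
      + augI n * Ideal.span {sg v ^ 2 * muv v m}

theorem colIdeal_eq (n m u : ℕ) (lead : Ideal (LaurentR n)) (v : Fin n) :
    colIdeal n m u lead v = lead * (augI n * colGen n m u + OI n m ^ 2) + colTail n m u v := by
  simp only [colIdeal, colGen, colTail, mul_add, Finset.mul_sum, mul_ite, mul_zero]

theorem map_truncHom_colGen {n u : ℕ} (m : ℕ) :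
    (colGen n m u).map (truncHom n u) = colGen n m u := by
  rw [colGen, Submodule.add_eq_sup, Ideal.map_sup, map_truncHom_OI, ← Ideal.mapHom_apply, map_sum]
  congr 1
  refine Finset.sum_congr rfl fun r _ => ?_
  split_ifs with h
  · rw [Ideal.mapHom_apply, Ideal.map_span, Set.image_singleton, map_mul, truncHom_sg_of_lt h,
      truncHom_muv_of_lt h]
  · exact map_zero _

theorem colTail_le_augTil {n u : ℕ} (m : ℕ) (v : Fin n) : colTail n m u v ≤ augTil n u := by
  have hsum : ∀ p : Fin n → Prop, (∀ r, p r → u ≤ r.val) → ∀ [DecidablePred p],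
      (∑ r : Fin n, if p r then Ideal.span {sg r ^ 3 * muv r m} else 0) ≤ augTil n u := by
    intro p hp _
    rw [Ideal.sum_eq_sup]
    refine Finset.sup_le fun r _ => ?_
    split_ifs with hr
    · exact (Ideal.span_singleton_le_iff_mem _).mpr (sg_pow_mul_mem_augTil (hp r hr) three_pos _)
    · exact bot_le
  rw [colTail]
  split_ifs with hv
  · exact hsum _ fun _ => id
  · refine sup_le (hsum _ fun _ => And.left) (Ideal.mul_le_right.trans ?_)
    exact (Ideal.span_singleton_le_iff_mem _).mpr (sg_pow_mul_mem_augTil (not_lt.mp hv) two_pos _)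

theorem Jfull_inf_augTil (n m u : ℕ) (v : Fin n) : Jfull n m u v ⊓ augTil n u = Jtil n m u v := by
  rw [Jfull, Jtil, colIdeal_eq, colIdeal_eq, ← ker_truncHom]
  exact Ideal.mul_mul_add_add_inf_ker_eq truncHom_truncHom map_truncHom_augI_le
    (map_truncHom_colGen m) (by rw [Ideal.map_pow, map_truncHom_OI])
    (ker_truncHom.symm ▸ colTail_le_augTil m v) (ker_truncHom.symm ▸ augTil_le_augI)

theorem statement_15_general (n m u : ℕ) (v : Fin n) :
    Jfull n m u v ⊓ augTil n u = Jtil n m u v ∧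
    JmatFull n m u ∩ {g : IAn n | ∀ k l, (matOf g - 1) k l ∈ augTil n u} =
      JmatTil n m u := by
  refine ⟨Jfull_inf_augTil n m u v, ?_⟩
  ext g
  simp only [JmatFull, JmatTil, Set.mem_inter_iff, Set.mem_ofPred_eq, ← Jfull_inf_augTil,
    Submodule.mem_inf, forall_and]
  tauto

/-- For `0 ≤ u ≤ n` and `1 ≤ v ≤ n`, `J_{m,u,v} ∩ 𝔄̃_u = J̃_{m,u,v}`, and
consequently `𝕁_{m,u} ∩ Ã_u = 𝕁̃_{m,u}` where
`Ã_u = {B ∈ IA_n : all entries of B − I lie in 𝔄̃_u}`. -/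
theorem statement_15 (n m u : ℕ) (hn : 1 ≤ n) (hm : 1 ≤ m) (hu : u ≤ n) (v : Fin n) :
    Jfull n m u v ⊓ augTil n u = Jtil n m u v ∧
    JmatFull n m u ∩ {g : IAn n | ∀ k l, (matOf g - 1) k l ∈ augTil n u} =
      JmatTil n m u :=
  statement_15_general n m u v
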